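/- arXiv:1704.07901 — 6 statements merged into one kernel-verified Lean document; each statement's English description precedes it below -/
import Mathlib

section
/- Let f be a linearized polynomial over \mathbb{F}_{q^m} with P coefficients, let \theta_1,...,\theta_{P_o} \in \mathbb{F}_{q^m} be linearly independent over \mathbb{F}_q, and let G be a P_o \times P matrix with entries in \mathbb{F}_q of rank P. Then f is uniquely determined by the row vector [f(\theta_1),...,f(\theta_{P_o})] \cdot G; i.e., if two such linearized polynomials give the same product with G, they are equal. -/
/-!
Put `η_j = ∑_i G_ij θ_i`. Since a linearized polynomial `f` is `𝔽_q`-linear, the `j`-th entry of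
`[f(θ_1),...,f(θ_{P_o})] ⬝ G` is `f(η_j)`, and the `η_j` are linearly independent because `G` has
independent columns. Hence `f_v - f_w` vanishes on the `q^P` points of the `𝔽_q`-span of the `η_j`,
while as a polynomial its degree is below `q^P`; so it is the zero polynomial and `v = w`.
-/

open Polynomial

theorem LinearIndependent.sum_smul_of_rank_eq_card {K M m n : Type*} [Field K] [AddCommGroup M]
    [Module K M] [Fintype m] [Fintype n] {θ : m → M} (hθ : LinearIndependent K θ)
    {G : Matrix m n K} (hG : G.rank = Fintype.card n) :
    LinearIndependent K fun j ↦ ∑ i, G i j • θ i := by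
  have hcols : LinearIndependent K G.col := by
    rw [linearIndependent_iff_card_eq_finrank_span, ← hG, Matrix.rank_eq_finrank_span_cols]
    rfl
  have hcomb : LinearMap.ker (Fintype.linearCombination K θ) = ⊥ :=
    LinearMap.ker_eq_bot.2 hθ.fintypeLinearCombination_injective
  simpa [Function.comp_def, Fintype.linearCombination_apply] using hcols.map' _ hcomb

section Linearized

variable {F : Type*} [Field F] {P : ℕ}

noncomputable def linearizedPoly (q : ℕ) (u : Fin P → F) : F[X] :=
  ∑ l : Fin P, C (u l) * X ^ q ^ (l : ℕ)

theorem eval_linearizedPoly (q : ℕ) (u : Fin P → F) (x : F) :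
    (linearizedPoly q u).eval x = ∑ l : Fin P, u l * x ^ q ^ (l : ℕ) := by
  simp [linearizedPoly, eval_finsetSum]

theorem coeff_linearizedPoly_pow {q : ℕ} (hq : 1 < q) (u : Fin P → F) (l : Fin P) :
    (linearizedPoly q u).coeff (q ^ (l : ℕ)) = u l := by
  rw [linearizedPoly, finsetSum_coeff, Finset.sum_eq_single l]
  · simp
  · intro k _ hkl
    rw [coeff_C_mul_X_pow, if_neg (fun h ↦ hkl (Fin.ext (Nat.pow_right_injective hq h).symm))]
  · simp

theorem natDegree_linearizedPoly_lt {q : ℕ} (hq : 1 < q) (u : Fin P → F) :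
    (linearizedPoly q u).natDegree < q ^ P := by
  cases P with
  | zero => simp [linearizedPoly]
  | succ n =>
    refine (natDegree_sum_le_of_forall_le _ _ fun l _ ↦ ?_).trans_lt
      (Nat.pow_lt_pow_right hq n.lt_succ_self)
    exact (natDegree_C_mul_X_pow_le _ _).trans (Nat.pow_le_pow_right (by omega) (by omega))

variable (Fq : Type*) [Field Fq] [Fintype Fq] [Algebra Fq F]

noncomputable def linearizedMap (u : Fin P → F) : F →ₗ[Fq] F :=
  ∑ l : Fin P, u l • (FiniteField.frobeniusAlgHom Fq F ^ (l : ℕ)).toLinearMap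

variable {Fq}

theorem linearizedMap_apply (u : Fin P → F) (x : F) :
    linearizedMap Fq u x = ∑ l : Fin P, u l * x ^ Fintype.card Fq ^ (l : ℕ) := by
  simp [linearizedMap, AlgHom.coe_pow, FiniteField.coe_frobeniusAlgHom, pow_iterate]

theorem linearizedMap_sub (v w : Fin P → F) :
    linearizedMap Fq (v - w) = linearizedMap Fq v - linearizedMap Fq w := by
  ext x
  simp [linearizedMap_apply, sub_mul]

theorem linearizedMap_sum_smul {ι : Type*} [Fintype ι] (u : Fin P → F) (c : ι → Fq)
    (x : ι → F) :
    linearizedMap Fq u (∑ i, c i • x i) =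
      ∑ i, linearizedMap Fq u (x i) * algebraMap Fq F (c i) := by
  rw [map_sum]
  exact Finset.sum_congr rfl fun i _ ↦ by rw [map_smul, Algebra.smul_def, mul_comm]

theorem eq_zero_of_linearizedMap_apply_eq_zero {u η : Fin P → F} (hη : LinearIndependent Fq η)
    (h : ∀ j, linearizedMap Fq u (η j) = 0) : u = 0 := by
  have hq : 1 < Fintype.card Fq := Fintype.one_lt_card
  have hpoly : linearizedPoly (Fintype.card Fq) u = 0 := by
    refine eq_zero_of_natDegree_lt_card_of_eval_eq_zero _ hη.fintypeLinearCombination_injective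
      (fun c ↦ ?_) ?_
    · rw [eval_linearizedPoly, ← linearizedMap_apply, Fintype.linearCombination_apply,
        linearizedMap_sum_smul]
      simp [h]
    · simpa using natDegree_linearizedPoly_lt hq u
  funext l
  rw [← coeff_linearizedPoly_pow hq u l, hpoly, coeff_zero, Pi.zero_apply]

end Linearized

theorem linearized_poly_unique_from_full_rank_combinations_general
    (Fq F : Type*) [Field Fq] [Fintype Fq] [Field F] [Algebra Fq F]
    (P Po : ℕ) (v w : Fin P → F) (θ : Fin Po → F)
    (hθ : LinearIndependent Fq θ)
    (G : Matrix (Fin Po) (Fin P) Fq) (hG : G.rank = P)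
    (h : ∀ j : Fin P,
      (∑ i : Fin Po,
          (∑ l : Fin P, v l * θ i ^ (Fintype.card Fq) ^ (l : ℕ)) * algebraMap Fq F (G i j)) =
        ∑ i : Fin Po,
          (∑ l : Fin P, w l * θ i ^ (Fintype.card Fq) ^ (l : ℕ)) * algebraMap Fq F (G i j)) :
    v = w := by
  have hη := hθ.sum_smul_of_rank_eq_card (hG.trans (Fintype.card_fin P).symm)
  refine sub_eq_zero.1 (eq_zero_of_linearizedMap_apply_eq_zero hη fun j ↦ ?_)
  simp only [← linearizedMap_apply] at h
  rw [linearizedMap_sub, LinearMap.sub_apply, linearizedMap_sum_smul, linearizedMap_sum_smul, h j,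
    sub_self]

/-- A linearized polynomial `f(x) = ∑_{i=1}^{P} v_i x^{q^{i-1}}` with `P` coefficients
is uniquely determined by `[f(θ_1),...,f(θ_{P_o})] ⬝ G`, where `θ_1,...,θ_{P_o}` are
linearly independent over `𝔽_q` and `G` is a `P_o × P` matrix over `𝔽_q` of rank `P`. -/
theorem linearized_poly_unique_from_full_rank_combinations
    (Fq F : Type*) [Field Fq] [Fintype Fq] [Field F] [Algebra Fq F]
    (P Po : ℕ) (hPPo : P ≤ Po) (v w : Fin P → F) (θ : Fin Po → F)
    (hθ : LinearIndependent Fq θ)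
    (G : Matrix (Fin Po) (Fin P) Fq) (hG : G.rank = P)
    (h : ∀ j : Fin P,
      (∑ i : Fin Po,
          (∑ l : Fin P, v l * θ i ^ (Fintype.card Fq) ^ (l : ℕ)) * algebraMap Fq F (G i j)) =
        ∑ i : Fin Po,
          (∑ l : Fin P, w l * θ i ^ (Fintype.card Fq) ^ (l : ℕ)) * algebraMap Fq F (G i j)) :
    v = w :=
  linearized_poly_unique_from_full_rank_combinations_general Fq F P Po v w θ hθ G hG h
end

section
/- (Redundancy Reduction Lemma) Fix a demand vector d: I_K \to I_N, a transmission type t with support P' \cup \bar{P'} (P' the variable set), a set A \subseteq \cup_{n \in \bar{P'}} I^{[n]} with |A \cap I^{[n]}| = t_n for each n \in \bar{P'}, leaders \ell^{[n]} \in I^{[n]} for n \in P', the leader set L = \cup_{n\in P'}\{\ell^{[n]}\}, and sets Q_n \subseteq I^{[n]} \setminus \{\ell^{[n]}\} with |Q_n| = t_n, Q = \cup_{n \in P'} Q_n. Then, over \mathbb{F}_2, \bigoplus over all V \subseteq Q \cup L with |V \cap I^{[n]}| = t_n for all n \in P', of \bigoplus_{k \in V} W_{d_k, V \cup A \setminus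 \{k\}}, equals 0. -/
/-!
Pair the term `(V, k)` with `(insert a (V.erase k), a)`, where `a` is the unique element of the
block `insert (ℓ n) (Q n)` of `n = d k` missing from `V`: the block has `tv n + 1` elements and
`V` meets it in `tv n`. Both terms equal `W (d k) (V.erase k ∪ A)`, and the pairing is a
fixed-point-free involution, so the sum vanishes in characteristic two.
-/

open Finset

theorem Finset.sdiff_insert_erase_eq_singleton {α : Type*} [DecidableEq α] {B V : Finset α}
    {a k : α} (h : B \ V = {a}) (hkV : k ∈ V) (hkB : k ∈ B) :
    B \ insert a (V.erase k) = {k} := by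
  have ha : a ∉ V := (by simpa using Finset.ext_iff.mp h a : a ∈ B ∧ a ∉ V).2
  ext x
  have hx := Finset.ext_iff.mp h x
  simp only [mem_sdiff, mem_insert, mem_erase, mem_singleton] at hx ⊢
  grind

theorem Finset.filter_biUnion_eq {ι α : Type*} [DecidableEq ι] [DecidableEq α] {d : α → ι}
    {P : Finset ι} {T : ι → Finset α} (hT : ∀ m ∈ P, ∀ x ∈ T m, d x = m) {n : ι} (hn : n ∈ P) :
    (P.biUnion T).filter (d · = n) = T n := by
  ext x
  simp only [mem_filter, mem_biUnion]
  constructor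
  · rintro ⟨⟨m, hm, hx⟩, rfl⟩
    rwa [hT m hm x hx]
  · exact fun hx => ⟨⟨n, hn, hx⟩, hT n hn x hx⟩

section SubsetsOfType

variable {ι α M : Type*} [DecidableEq ι] [AddCommGroup M]
  {d : α → ι} {S V : Finset α} {P : Finset ι} {c : ι → ℕ}

def subsetsOfType (d : α → ι) (S : Finset α) (P : Finset ι) (c : ι → ℕ) :
    Finset (Finset α) :=
  S.powerset.filter fun V => ∀ n ∈ P, #(V.filter (d · = n)) = c n

theorem mem_subsetsOfType :
    V ∈ subsetsOfType d S P c ↔ V ⊆ S ∧ ∀ n ∈ P, #(V.filter (d · = n)) = c n := by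
  simp [subsetsOfType]

variable [DecidableEq α]

theorem insert_erase_mem_subsetsOfType {a k : α} (hV : V ∈ subsetsOfType d S P c)
    (hkV : k ∈ V) (haS : a ∈ S) (haV : a ∉ V) (hda : d a = d k) :
    insert a (V.erase k) ∈ subsetsOfType d S P c := by
  obtain ⟨hVS, hVc⟩ := mem_subsetsOfType.mp hV
  refine mem_subsetsOfType.mpr ⟨insert_subset haS ((erase_subset k V).trans hVS), ?_⟩
  intro n hn
  rw [filter_insert, filter_erase]
  by_cases hkn : d k = n
  · have hk : k ∈ V.filter (d · = n) := mem_filter.mpr ⟨hkV, hkn⟩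
    rw [if_pos (hda.trans hkn), card_insert_of_notMem (fun h => haV (mem_filter.mp
      (mem_of_mem_erase h)).1), card_erase_add_one hk, hVc n hn]
  · have hk : k ∉ V.filter (d · = n) := fun h => hkn (mem_filter.mp h).2
    rw [if_neg (hda ▸ hkn), erase_eq_of_notMem hk, hVc n hn]

theorem card_filter_sdiff_eq_one (hcard : ∀ n ∈ P, #(S.filter (d · = n)) = c n + 1)
    (hV : V ∈ subsetsOfType d S P c) {n : ι} (hn : n ∈ P) :
    #(S.filter (d · = n) \ V) = 1 := by
  obtain ⟨hVS, hVc⟩ := mem_subsetsOfType.mp hV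
  have hinter : V ∩ S.filter (d · = n) = V.filter (d · = n) := by
    rw [inter_filter, inter_eq_left.mpr hVS]
  rw [card_sdiff, hinter, hcard n hn, hVc n hn]
  omega

theorem sum_subsetsOfType_sum_erase_eq_zero (h2 : ∀ x : M, x + x = 0)
    (hS : ∀ x ∈ S, d x ∈ P) (hcard : ∀ n ∈ P, #(S.filter (d · = n)) = c n + 1)
    (G : ι → Finset α → M) :
    ∑ V ∈ subsetsOfType d S P c, ∑ k ∈ V, G (d k) (V.erase k) = 0 := by
  rw [sum_sigma']
  have hpartner : ∀ p ∈ (subsetsOfType d S P c).sigma id,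
      ∃ a, S.filter (d · = d p.2) \ p.1 = {a} := by
    intro p hp
    obtain ⟨hV, hk⟩ := mem_sigma.mp hp
    exact card_eq_one.mp (card_filter_sdiff_eq_one hcard hV
      (hS _ ((mem_subsetsOfType.mp hV).1 hk)))
  choose a ha using hpartner
  have ha_mem : ∀ p hp, a p hp ∈ S ∧ d (a p hp) = d p.2 ∧ a p hp ∉ p.1 := by
    intro p hp
    have h : a p hp ∈ S.filter (d · = d p.2) \ p.1 := by
      rw [ha p hp]
      exact mem_singleton_self _
    simpa [and_assoc] using h
  refine sum_involution (fun p hp => ⟨insert (a p hp) (p.1.erase p.2), a p hp⟩) ?_ ?_ ?_ ?_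
  · rintro ⟨V, k⟩ hp
    obtain ⟨-, hda, haV⟩ := ha_mem _ hp
    dsimp only
    rw [hda, erase_insert (fun h => haV (mem_of_mem_erase h))]
    exact h2 _
  · rintro ⟨V, k⟩ hp - heq
    have hak : a _ hp = k := congrArg Sigma.snd heq
    have haV := (ha_mem _ hp).2.2
    rw [hak] at haV
    exact haV (mem_sigma.mp hp).2
  · rintro ⟨V, k⟩ hp
    obtain ⟨hV, hk⟩ := mem_sigma.mp hp
    obtain ⟨haS, hda, haV⟩ := ha_mem _ hp
    exact mem_sigma.mpr ⟨insert_erase_mem_subsetsOfType hV hk haS haV hda, mem_insert_self _ _⟩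
  · rintro ⟨V, k⟩ hp
    obtain ⟨hV, hk⟩ := mem_sigma.mp hp
    obtain ⟨-, hda, haV⟩ := ha_mem _ hp
    generalize_proofs hp'
    have hkS : k ∈ S.filter (d · = d k) := mem_filter.mpr ⟨(mem_subsetsOfType.mp hV).1 hk, rfl⟩
    have hak : a _ hp' = k := by
      have h := ha _ hp'
      dsimp only at h
      rw [hda, sdiff_insert_erase_eq_singleton (ha _ hp) hk hkS] at h
      exact (singleton_inj.mp h).symm
    dsimp only
    rw [hak, erase_insert (fun h => haV (mem_of_mem_erase h)), insert_erase hk]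

end SubsetsOfType

theorem redundancy_reduction_general {K N : ℕ} {M : Type*} [AddCommGroup M]
    (h2 : ∀ x : M, x + x = 0)
    (d : Fin K → Fin N)
    (tv : Fin N → ℕ)
    (P' Pbar : Finset (Fin N)) (hPP : Disjoint P' Pbar)
    (ℓ : Fin N → Fin K) (hℓ : ∀ n ∈ P', d (ℓ n) = n)
    (Q : Fin N → Finset (Fin K))
    (hQ : ∀ n ∈ P', Q n ⊆ (Finset.univ.filter (fun k => d k = n)).erase (ℓ n))
    (hQcard : ∀ n ∈ P', (Q n).card = tv n)
    (A : Finset (Fin K))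
    (hA : A ⊆ Pbar.biUnion (fun n => Finset.univ.filter (fun k => d k = n)))
    (W : Fin N → Finset (Fin K) → M) :
    ∑ V ∈ ((P'.biUnion (fun n => insert (ℓ n) (Q n))).powerset.filter
        (fun V => ∀ n ∈ P', (V ∩ Finset.univ.filter (fun k => d k = n)).card = tv n)),
      ∑ k ∈ V, W (d k) ((V ∪ A).erase k) = 0 := by
  set S := P'.biUnion fun n => insert (ℓ n) (Q n)
  have hblock : ∀ n ∈ P', ∀ k ∈ insert (ℓ n) (Q n), d k = n := by
    intro n hn k hk
    rcases mem_insert.mp hk with rfl | hkQ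
    · exact hℓ n hn
    · exact (mem_filter.mp (mem_of_mem_erase (hQ n hn hkQ))).2
  have hS : ∀ k ∈ S, d k ∈ P' := by
    intro k hk
    obtain ⟨n, hn, hkn⟩ := mem_biUnion.mp hk
    exact hblock n hn k hkn ▸ hn
  have hcard : ∀ n ∈ P', #(S.filter (d · = n)) = tv n + 1 := by
    intro n hn
    have hℓQ : ℓ n ∉ Q n := fun h => (mem_erase.mp (hQ n hn h)).1 rfl
    rw [filter_biUnion_eq hblock hn, card_insert_of_notMem hℓQ, hQcard n hn]
  have hSA : ∀ k ∈ S, k ∉ A := by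
    intro k hkS hkA
    obtain ⟨m, hm, hkm⟩ := mem_biUnion.mp (hA hkA)
    exact disjoint_left.mp hPP (hS k hkS) ((mem_filter.mp hkm).2 ▸ hm)
  have hindex : S.powerset.filter (fun V => ∀ n ∈ P', (V ∩ univ.filter (d · = n)).card = tv n)
      = subsetsOfType d S P' tv := by
    ext V
    simp only [subsetsOfType, mem_filter, inter_filter, inter_univ]
  calc _ = ∑ V ∈ subsetsOfType d S P' tv, ∑ k ∈ V, W (d k) (V.erase k ∪ A) := by
        refine sum_congr hindex fun V hV => sum_congr rfl fun k hk => ?_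
        have hkS := (mem_subsetsOfType.mp hV).1 hk
        rw [erase_union_distrib, erase_eq_of_notMem (hSA k hkS)]
    _ = 0 := sum_subsetsOfType_sum_erase_eq_zero h2 hS hcard fun n U => W n (U ∪ A)

/-- Redundancy Reduction Lemma. Fix a demand vector `d`, a transmission type `tv` with
variable set `P'` and fixed set `Pbar`, a set `A` of users requesting files in `Pbar`
with `|A ∩ I^{[n]}| = tv n`, leaders `ℓ n ∈ I^{[n]}` and sets `Q n ⊆ I^{[n]} \ {ℓ n}`
with `|Q n| = tv n`.  Then, in characteristic two,
`⨁_{V ⊆ Q ∪ L, |V ∩ I^{[n]}| = tv n ∀ n ∈ P'} ⨁_{k ∈ V} W_{d_k, (V ∪ A) \ {k}} = 0`. -/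
theorem redundancy_reduction {K N : ℕ} {M : Type*} [AddCommGroup M]
    (h2 : ∀ x : M, x + x = 0)
    (d : Fin K → Fin N)
    (tv : Fin N → ℕ)
    (P' Pbar : Finset (Fin N)) (hPP : Disjoint P' Pbar)
    (htpos : ∀ n ∈ P', 1 ≤ tv n)
    (ℓ : Fin N → Fin K) (hℓ : ∀ n ∈ P', d (ℓ n) = n)
    (Q : Fin N → Finset (Fin K))
    (hQ : ∀ n ∈ P', Q n ⊆ (Finset.univ.filter (fun k => d k = n)).erase (ℓ n))
    (hQcard : ∀ n ∈ P', (Q n).card = tv n)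
    (A : Finset (Fin K))
    (hA : A ⊆ Pbar.biUnion (fun n => Finset.univ.filter (fun k => d k = n)))
    (hAcard : ∀ n ∈ Pbar, (A ∩ Finset.univ.filter (fun k => d k = n)).card = tv n)
    (W : Fin N → Finset (Fin K) → M) :
    ∑ V ∈ ((P'.biUnion (fun n => insert (ℓ n) (Q n))).powerset.filter
        (fun V => ∀ n ∈ P', (V ∩ Finset.univ.filter (fun k => d k = n)).card = tv n)),
      ∑ k ∈ V, W (d k) ((V ∪ A).erase k) = 0 :=
  redundancy_reduction_general h2 d tv P' Pbar hPP ℓ hℓ Q hQ hQcard A hA W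
end

section
/- (Separation Lemma) Fix a demand vector d and for each file n with m_n > 0 let I^{[n]} be the set of users requesting n. For a transmission type \vec{t}, a partition block P' \subseteq supp(\vec{t}), and a set A \subseteq \cup_{n \in supp(\vec{t}) \setminus P'} I^{[n]} with |A \cap I^{[n]}| = t_n for all n in supp(\vec{t}) \setminus P', define W_{d, \vec{t}, P', A} as the set of symbols W_{d_k, A \cup B \setminus \{k\}} over all B \subseteq \cup_{n \in P'} I^{[n]} with |B \cap I^{[n]}| = t_n for all n \in P' and all k with d_k \in P'. Then for any two distinct triples (\vec{t}', P'', A') \ne (\vec{t}'', P''', A'') satisfying these constraints (with P'' a block of the decomposition pattern for \vec{t}' and P''' for \vec{t}''), the sets W_{d,\vec{t}',P'',A'} and W_{d,\vec{t}'',P''',A''} are disjoint. -/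
/-!
A symbol `W_{n,C}` determines its triple: the transmission type is `t_i = |C ∩ I^{[i]}|`
plus one for `i = n` (the erased user `k` requests `n`), the block is the one containing `n`
(blocks of one partition are disjoint), and `A` is the part of `C` lying outside that block.
-/

/-- The set of symbols `W_{d_k, (A ∪ B) \ {k}}` associated with a demand vector `d`,
transmission type `tv`, partition block `P`, and fixed user set `A`; a symbol is
uniquely indexed by the pair (file index, subset of users). -/
def Wset {K N : ℕ} (d : Fin K → Fin N) (Iu : Fin N → Finset (Fin K))
    (tv : Fin N → ℕ) (P : Finset (Fin N)) (A : Finset (Fin K)) :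
    Set (Fin N × Finset (Fin K)) :=
  {p | ∃ B : Finset (Fin K), B ⊆ P.biUnion Iu ∧ (∀ n ∈ P, (B ∩ Iu n).card = tv n) ∧
      ∃ k ∈ B, d k ∈ P ∧ p = (d k, (A ∪ B).erase k)}

open Finset

section Fibers

variable {α β : Type*} [Fintype α] [DecidableEq α] [DecidableEq β]
  {d : α → β} {Iu : β → Finset α}

theorem mem_biUnion_fiber_iff (hI : ∀ n, Iu n = univ.filter (fun k => d k = n))
    {P : Finset β} {a : α} : a ∈ P.biUnion Iu ↔ d a ∈ P := by
  simp [hI]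

theorem card_erase_inter_fiber_add (hI : ∀ n, Iu n = univ.filter (fun k => d k = n))
    {S : Finset α} {k : α} (hk : k ∈ S) (i : β) :
    ((S.erase k) ∩ Iu i).card + (if i = d k then 1 else 0) = (S ∩ Iu i).card := by
  rw [erase_inter]
  split_ifs with hik
  · have hkS : k ∈ S ∩ Iu i := mem_inter.2 ⟨hk, by simp [hI, hik]⟩
    rw [card_erase_add_one hkS]
  · have hkS : k ∉ S ∩ Iu i := by simp [hI, Ne.symm hik]
    rw [erase_eq_of_notMem hkS, add_zero]

variable [Fintype β] {t : β → ℕ} {P : Finset β} {A B : Finset α}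

theorem card_union_inter_fiber (hI : ∀ n, Iu n = univ.filter (fun k => d k = n))
    (hA : A ⊆ (univ.filter (fun n => t n ≠ 0) \ P).biUnion Iu)
    (hAcard : ∀ n, t n ≠ 0 → n ∉ P → (A ∩ Iu n).card = t n)
    (hB : B ⊆ P.biUnion Iu) (hBcard : ∀ n ∈ P, (B ∩ Iu n).card = t n) (i : β) :
    ((A ∪ B) ∩ Iu i).card = t i := by
  have hdA : ∀ a ∈ A, t (d a) ≠ 0 ∧ d a ∉ P := fun a ha => by
    simpa using (mem_biUnion_fiber_iff hI).1 (hA ha)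
  have hdB : ∀ a ∈ B, d a ∈ P := fun a ha => (mem_biUnion_fiber_iff hI).1 (hB ha)
  have hA_empty (h : t i = 0 ∨ i ∈ P) : A ∩ Iu i = ∅ := by
    ext a
    simp only [mem_inter, hI, mem_filter, mem_univ, true_and, notMem_empty, iff_false, not_and]
    rintro ha rfl
    exact h.elim (hdA a ha).1 (hdA a ha).2
  rw [union_inter_distrib_right]
  by_cases hiP : i ∈ P
  · rw [hA_empty (Or.inr hiP), empty_union, hBcard i hiP]
  · have hB_empty : B ∩ Iu i = ∅ := by
      ext a
      simp only [mem_inter, hI, mem_filter, mem_univ, true_and, notMem_empty, iff_false,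
        not_and]
      rintro ha rfl
      exact hiP (hdB a ha)
    rw [hB_empty, union_empty]
    by_cases hti : t i = 0
    · rw [hA_empty (Or.inl hti), hti, card_empty]
    · exact hAcard i hti hiP

theorem filter_erase_union_eq_left (hI : ∀ n, Iu n = univ.filter (fun k => d k = n))
    (hA : A ⊆ (univ.filter (fun n => t n ≠ 0) \ P).biUnion Iu)
    (hB : B ⊆ P.biUnion Iu) {k : α} (hkP : d k ∈ P) :
    ((A ∪ B).erase k).filter (fun a => d a ∉ P) = A := by
  have hdA : ∀ a ∈ A, d a ∉ P := fun a ha =>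
    (mem_sdiff.1 ((mem_biUnion_fiber_iff hI).1 (hA ha))).2
  have hdB : ∀ a ∈ B, d a ∈ P := fun a ha => (mem_biUnion_fiber_iff hI).1 (hB ha)
  ext a
  simp only [mem_filter, mem_erase, mem_union]
  constructor
  · rintro ⟨⟨-, ha | ha⟩, haP⟩
    · exact ha
    · exact absurd (hdB a ha) haP
  · intro ha
    exact ⟨⟨fun hak => hdA a ha (hak ▸ hkP), Or.inl ha⟩, hdA a ha⟩

end Fibers

theorem Wset_recover {K N : ℕ} {d : Fin K → Fin N} {Iu : Fin N → Finset (Fin K)}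
    (hI : ∀ n, Iu n = univ.filter (fun k => d k = n))
    {t : Fin N → ℕ} {P : Finset (Fin N)} {A : Finset (Fin K)}
    (hA : A ⊆ (univ.filter (fun n => t n ≠ 0) \ P).biUnion Iu)
    (hAcard : ∀ n, t n ≠ 0 → n ∉ P → (A ∩ Iu n).card = t n)
    {n : Fin N} {C : Finset (Fin K)} (hC : (n, C) ∈ Wset d Iu t P A) :
    n ∈ P ∧ (∀ i, t i = (C ∩ Iu i).card + if i = n then 1 else 0) ∧
      A = C.filter (fun a => d a ∉ P) := by
  obtain ⟨B, hB, hBcard, k, hkB, hkP, hnC⟩ := hC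
  obtain ⟨rfl, rfl⟩ := Prod.mk.inj hnC
  refine ⟨hkP, fun i => ?_, (filter_erase_union_eq_left hI hA hB hkP).symm⟩
  rw [card_erase_inter_fiber_add hI (mem_union_right A hkB),
    card_union_inter_fiber hI hA hAcard hB hBcard]

theorem separation_general {K N : ℕ} (d : Fin K → Fin N)
    (Iu : Fin N → Finset (Fin K))
    (hI : ∀ n, Iu n = Finset.univ.filter (fun k => d k = n))
    (t' t'' : Fin N → ℕ) (P₁ P₂ : Finset (Fin N)) (A₁ A₂ : Finset (Fin K))
    (hA₁ : A₁ ⊆ (Finset.univ.filter (fun n => t' n ≠ 0) \ P₁).biUnion Iu)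
    (hA₁card : ∀ n, t' n ≠ 0 → n ∉ P₁ → (A₁ ∩ Iu n).card = t' n)
    (hA₂ : A₂ ⊆ (Finset.univ.filter (fun n => t'' n ≠ 0) \ P₂).biUnion Iu)
    (hA₂card : ∀ n, t'' n ≠ 0 → n ∉ P₂ → (A₂ ∩ Iu n).card = t'' n)
    (hblocks : t' = t'' → P₁ = P₂ ∨ Disjoint P₁ P₂)
    (hne : (t', P₁, A₁) ≠ (t'', P₂, A₂)) :
    Disjoint (Wset d Iu t' P₁ A₁) (Wset d Iu t'' P₂ A₂) := by
  rw [Set.disjoint_left]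
  rintro ⟨n, C⟩ hC₁ hC₂
  obtain ⟨hn₁, ht₁, hA₁C⟩ := Wset_recover hI hA₁ hA₁card hC₁
  obtain ⟨hn₂, ht₂, hA₂C⟩ := Wset_recover hI hA₂ hA₂card hC₂
  have ht : t' = t'' := funext fun i => (ht₁ i).trans (ht₂ i).symm
  have hP : P₁ = P₂ := (hblocks ht).resolve_right (not_disjoint_iff.2 ⟨n, hn₁, hn₂⟩)
  have hA : A₁ = A₂ := by rw [hA₁C, hA₂C, hP]
  exact hne (by rw [ht, hP, hA])

/-- Separation Lemma: for two distinct triples (transmission type, partition block,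
fixed user set) satisfying the validity constraints, the corresponding symbol sets are
disjoint. -/
theorem separation {K N : ℕ} (d : Fin K → Fin N)
    (Iu : Fin N → Finset (Fin K))
    (hI : ∀ n, Iu n = Finset.univ.filter (fun k => d k = n))
    (t' t'' : Fin N → ℕ) (P₁ P₂ : Finset (Fin N)) (A₁ A₂ : Finset (Fin K))
    (hP₁ : ∀ n ∈ P₁, 1 ≤ t' n)
    (ht₁ : ∀ n, t' n ≤ (Iu n).card)
    (hA₁ : A₁ ⊆ (Finset.univ.filter (fun n => t' n ≠ 0) \ P₁).biUnion Iu)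
    (hA₁card : ∀ n, t' n ≠ 0 → n ∉ P₁ → (A₁ ∩ Iu n).card = t' n)
    (hP₂ : ∀ n ∈ P₂, 1 ≤ t'' n)
    (ht₂ : ∀ n, t'' n ≤ (Iu n).card)
    (hA₂ : A₂ ⊆ (Finset.univ.filter (fun n => t'' n ≠ 0) \ P₂).biUnion Iu)
    (hA₂card : ∀ n, t'' n ≠ 0 → n ∉ P₂ → (A₂ ∩ Iu n).card = t'' n)
    (hblocks : t' = t'' → P₁ = P₂ ∨ Disjoint P₁ P₂)
    (hne : (t', P₁, A₁) ≠ (t'', P₂, A₂)) :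
    Disjoint (Wset d Iu t' P₁ A₁) (Wset d Iu t'' P₂ A₂) :=
  separation_general d Iu hI t' t'' P₁ P₂ A₁ A₂ hA₁ hA₁card hA₂ hA₂card hblocks hne
end

section
/- With no decomposition (each transmission type's partition being the single block supp(\vec{t})), the delivery rate formula R_{d,P} = \sum_{\vec{t}} [\prod_{n \in supp(\vec{t})} \binom{m_n}{t_n} - \prod_{n \in supp(\vec{t})} \binom{m_n-1}{t_n}] equals \binom{K}{t+1} - \binom{K-N^*}{t+1}, where the sum is over all transmission types \vec{t} with t_n \le m_n and \sum_n t_n = t+1, m_n are the demand multiplicities summing to K, and N^* = |\{n: m_n > 0\}|. -/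
/-!
Both sums over transmission types are instances of the multivariate Vandermonde identity
`∑_{|v| = k} ∏ᵢ C(aᵢ, vᵢ) = C(∑ᵢ aᵢ, k)`: once with `a = m`, and once with `aᵢ = mᵢ - 1`,
whose total is `K - N*`. The box constraint `v ≤ m` on transmission types is harmless, because
the binomials vanish outside it, and so is restricting the products to `supp v`, because
`C(a, 0) = 1`.
-/

open Finset

theorem Finset.sum_piAntidiag_prod_choose {ι : Type*} [DecidableEq ι] (s : Finset ι)
    (a : ι → ℕ) (k : ℕ) :
    ∑ v ∈ s.piAntidiag k, ∏ i ∈ s, (a i).choose (v i) = (∑ i ∈ s, a i).choose k := by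
  induction s using Finset.cons_induction generalizing k with
  | empty => rcases k with _ | k <;> simp
  | cons i s hi ih =>
    rw [piAntidiag_cons, sum_disjiUnion, sum_cons, Nat.add_choose_eq]
    refine sum_congr rfl fun p _ => ?_
    rw [sum_map, ← ih, mul_sum]
    refine sum_congr rfl fun v hv => ?_
    have hvi : v i = 0 := by
      by_contra h
      exact hi ((mem_piAntidiag.1 hv).2 i h)
    rw [prod_cons]
    simp only [addRightEmbedding_apply, Pi.add_apply, if_pos, hvi, zero_add]
    congr 1
    refine prod_congr rfl fun j hj => ?_
    rw [if_neg (ne_of_mem_of_not_mem hj hi), add_zero]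

theorem sum_filter_piFinset_prod_choose_of_le {ι : Type*} [Fintype ι] [DecidableEq ι]
    {a b : ι → ℕ} (hab : a ≤ b) (k : ℕ) :
    ∑ v ∈ (Fintype.piFinset fun i => range (b i + 1)) with ∑ i, v i = k,
      ∏ i, (a i).choose (v i) = (∑ i, a i).choose k := by
  rw [← sum_piAntidiag_prod_choose]
  refine sum_subset (fun v hv => ?_) fun v hv hvF => ?_
  · simp_all
  · obtain ⟨i, hi⟩ : ∃ i, b i < v i := by
      simpa [(mem_piAntidiag.1 hv).1, Nat.lt_succ_iff] using hvF
    exact prod_eq_zero (mem_univ i) (Nat.choose_eq_zero_of_lt ((hab i).trans_lt hi))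

theorem prod_filter_ne_zero_choose {ι R : Type*} [CommSemiring R] (s : Finset ι)
    (a v : ι → ℕ) :
    ∏ i ∈ s with v i ≠ 0, ((a i).choose (v i) : R) = ∏ i ∈ s, ((a i).choose (v i) : R) :=
  prod_filter_of_ne fun i _ h => by contrapose! h; simp [h]

theorem sum_pred_eq_sub_card_pos {ι : Type*} [Fintype ι] (m : ι → ℕ) :
    ∑ i, (m i - 1) = ∑ i, m i - #{i | 0 < m i} := by
  rw [card_filter, eq_tsub_iff_add_eq_of_le, ← sum_add_distrib]
  · exact sum_congr rfl fun i _ => by split_ifs <;> omega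
  · exact sum_le_sum fun i _ => by split_ifs <;> omega

theorem rate_no_decomposition_general (N K t : ℕ) (m : Fin N → ℕ)
    (hm : ∑ n, m n = K) :
    ∑ v ∈ (Fintype.piFinset fun n => Finset.range (m n + 1)).filter
        (fun v => ∑ n, v n = t + 1),
      ((∏ n ∈ Finset.univ.filter (fun n => v n ≠ 0), ((m n).choose (v n) : ℤ)) -
        ∏ n ∈ Finset.univ.filter (fun n => v n ≠ 0), (((m n - 1).choose (v n) : ℤ)))
      = (K.choose (t + 1) : ℤ)
        - ((K - (Finset.univ.filter (fun n => 0 < m n)).card).choose (t + 1) : ℤ) := by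
  simp only [sum_sub_distrib, prod_filter_ne_zero_choose]
  rw [← hm, ← sum_pred_eq_sub_card_pos, ← sum_filter_piFinset_prod_choose_of_le le_rfl,
    ← sum_filter_piFinset_prod_choose_of_le (a := fun n => m n - 1) (fun n => Nat.sub_le _ _)]
  push_cast
  rfl

/-- With no decomposition, the delivery rate
`∑_{t⃗} [∏_{n ∈ supp(t⃗)} C(m_n,t_n) - ∏_{n ∈ supp(t⃗)} C(m_n-1,t_n)]`
equals `C(K, t+1) - C(K - N*, t+1)`, recovering the Yu–Maddah-Ali–Avestimehr rate. -/
theorem rate_no_decomposition (N K t : ℕ) (m : Fin N → ℕ)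
    (hm : ∑ n, m n = K) (ht : t ≤ K) :
    ∑ v ∈ (Fintype.piFinset fun n => Finset.range (m n + 1)).filter
        (fun v => ∑ n, v n = t + 1),
      ((∏ n ∈ Finset.univ.filter (fun n => v n ≠ 0), ((m n).choose (v n) : ℤ)) -
        ∏ n ∈ Finset.univ.filter (fun n => v n ≠ 0), (((m n - 1).choose (v n) : ℤ)))
      = (K.choose (t + 1) : ℤ)
        - ((K - (Finset.univ.filter (fun n => 0 < m n)).card).choose (t + 1) : ℤ) :=
  rate_no_decomposition_general N K t m hm
end

section
/- For nonnegative integers m_1,...,m_N with \sum_n m_n = K, N^* = |\{n: m_n>0\}|, and 0 \le t \le K-1: the sum over all transmission types \vec{t} (0 \le t_n \le m_n, \sum_n t_n = t+1) of \sum_{n \in supp(\vec{t})} \binom{m_n-1}{t_n-1} \prod_{n' \in supp(\vec{t}) \setminus \{n\}} \binom{m_{n'}}{t_{n'}} equals N^* \binom{K-1}{t}. -/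
/-!
Swap the two sums. For a fixed group `n` with `m n > 0`, lowering `v n` by one (choosing the
group's leader) turns the summand into `∏ i, (a i).choose (w i)` with `a = m` except
`a n = m n - 1`, and `w` ranging over the vectors with `∑ w = t`; by Vandermonde's identity
`∏ i, (X + 1) ^ a i = (X + 1) ^ (K - 1)` this sum is `(K - 1).choose t`. Groups with
`m n = 0` never appear in a support and contribute nothing.
-/

open Finset Polynomial

section

variable {ι : Type*} [Fintype ι] [DecidableEq ι]

theorem sum_prod_choose_eq_choose_sum (a : ι → ℕ) (s : ℕ) :
    ∑ v ∈ (Fintype.piFinset fun i => range (a i + 1)).filter (fun v => ∑ i, v i = s),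
      ∏ i, (a i).choose (v i) = (∑ i, a i).choose s := by
  have h : ((X + 1 : ℕ[X])) ^ (∑ i, a i) =
      ∑ v ∈ Fintype.piFinset fun i => range (a i + 1),
        C (∏ i, (a i).choose (v i)) * X ^ (∑ i, v i) := by
    simp_rw [← prod_pow_eq_pow_sum, add_pow, one_pow, mul_one, prod_univ_sum, prod_mul_distrib,
      prod_pow_eq_pow_sum, map_prod, mul_comm (X ^ _), ← C_eq_natCast, Nat.cast_id]
  have := congrArg (coeff · s) h
  simp only [coeff_X_add_one_pow, finsetSum_coeff, coeff_C_mul, coeff_X_pow, Nat.cast_id,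
    mul_ite, mul_one, mul_zero] at this
  rw [this, sum_filter]
  exact sum_congr rfl fun v _ => by simp only [eq_comm]

theorem sum_update_add_apply_self (v : ι → ℕ) (n : ι) (x : ℕ) :
    ∑ i, Function.update v n x i + v n = ∑ i, v i + x := by
  rw [sum_update_of_mem (mem_univ n), ← add_sum_erase univ v (mem_univ n),
    sdiff_singleton_eq_erase]
  ring

theorem sum_choose_pred_mul_prod_erase_choose (m : ι → ℕ) {n : ι} (hn : 0 < m n) (s : ℕ) :
    ∑ v ∈ (Fintype.piFinset fun i => range (m i + 1)).filter
        (fun v => ∑ i, v i = s + 1 ∧ v n ≠ 0),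
      (m n - 1).choose (v n - 1) * ∏ i ∈ univ.erase n, (m i).choose (v i)
      = ((∑ i, m i) - 1).choose s := by
  set a := Function.update m n (m n - 1)
  have ha : ∑ i, a i = (∑ i, m i) - 1 := by
    have := sum_update_add_apply_self m n (m n - 1)
    simp only [a]
    omega
  rw [← ha, ← sum_prod_choose_eq_choose_sum]
  refine sum_nbij' (fun v => Function.update v n (v n - 1))
    (fun w => Function.update w n (w n + 1)) ?_ ?_ ?_ ?_ ?_
  · intro v hv
    simp only [mem_filter, Fintype.mem_piFinset, mem_range] at hv ⊢
    obtain ⟨hv_le, hv_sum, hv_pos⟩ := hv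
    have := sum_update_add_apply_self v n (v n - 1)
    refine ⟨fun i => ?_, by omega⟩
    rcases eq_or_ne i n with rfl | hi
    · simp only [a, Function.update_self]
      have := hv_le i
      omega
    · simpa only [a, Function.update_of_ne hi] using hv_le i
  · intro w hw
    simp only [mem_filter, Fintype.mem_piFinset, mem_range] at hw ⊢
    obtain ⟨hw_le, hw_sum⟩ := hw
    have := sum_update_add_apply_self w n (w n + 1)
    refine ⟨fun i => ?_, by omega, by simp⟩
    rcases eq_or_ne i n with rfl | hi
    · have := hw_le i
      simp only [a, Function.update_self] at this ⊢
      omega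
    · simpa only [a, Function.update_of_ne hi] using hw_le i
  · intro v hv
    simp only [mem_filter] at hv
    simp only [Function.update_self, Function.update_idem]
    exact Function.update_eq_self_iff.mpr (by omega)
  · intro w _
    simp
  · intro v _
    rw [← mul_prod_erase univ _ (mem_univ n)]
    simp only [a, Function.update_self]
    congr 1
    exact prod_congr rfl fun i hi => by
      simp only [Function.update_of_ne (ne_of_mem_erase hi)]

theorem prod_erase_filter_ne_zero_choose (m v : ι → ℕ) (n : ι) :
    ∏ i ∈ (univ.filter fun i => v i ≠ 0).erase n, (m i).choose (v i)
      = ∏ i ∈ univ.erase n, (m i).choose (v i) := by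
  rw [← filter_erase]
  exact prod_filter_of_ne fun i _ h hv => h (by rw [hv, Nat.choose_zero_right])

end

theorem rate_full_decomposition_general (N K t : ℕ) (m : Fin N → ℕ)
    (hm : ∑ n, m n = K) :
    ∑ v ∈ (Fintype.piFinset fun n => Finset.range (m n + 1)).filter
        (fun v => ∑ n, v n = t + 1),
      ∑ n ∈ Finset.univ.filter (fun n => v n ≠ 0),
        (m n - 1).choose (v n - 1) *
          ∏ n' ∈ (Finset.univ.filter (fun n' => v n' ≠ 0)).erase n, (m n').choose (v n')
      = (Finset.univ.filter (fun n => 0 < m n)).card * (K - 1).choose t := by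
  subst hm
  simp_rw [prod_erase_filter_ne_zero_choose]
  rw [sum_comm' (t' := univ)
    (s' := fun n => (Fintype.piFinset fun n => range (m n + 1)).filter
      (fun v => ∑ n, v n = t + 1 ∧ v n ≠ 0))
    (fun v n => by simp only [mem_filter, mem_univ, true_and, and_true, and_assoc])]
  calc _ = ∑ n, if 0 < m n then ((∑ i, m i) - 1).choose t else 0 := by
        refine sum_congr rfl fun n _ => ?_
        split_ifs with hn
        · exact sum_choose_pred_mul_prod_erase_choose m hn t
        · refine sum_eq_zero fun v hv => ?_
          simp only [mem_filter, Fintype.mem_piFinset, mem_range] at hv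
          have := hv.1 n
          omega
    _ = _ := by rw [← sum_filter, sum_const, smul_eq_mul]

/-- Delivery rate of the fully decomposed (singleton-partition) scheme:
`∑_{t⃗} ∑_{n ∈ supp(t⃗)} C(m_n-1, t_n-1) ∏_{n' ∈ supp(t⃗) \ {n}} C(m_{n'}, t_{n'})
 = N* · C(K-1, t)` where `N* = |{n : m_n > 0}|` and `∑ m_n = K`. -/
theorem rate_full_decomposition (N K t : ℕ) (m : Fin N → ℕ)
    (hm : ∑ n, m n = K) (ht : t < K) :
    ∑ v ∈ (Fintype.piFinset fun n => Finset.range (m n + 1)).filter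
        (fun v => ∑ n, v n = t + 1),
      ∑ n ∈ Finset.univ.filter (fun n => v n ≠ 0),
        (m n - 1).choose (v n - 1) *
          ∏ n' ∈ (Finset.univ.filter (fun n' => v n' ≠ 0)).erase n, (m n').choose (v n')
      = (Finset.univ.filter (fun n => 0 < m n)).card * (K - 1).choose t :=
  rate_full_decomposition_general N K t m hm
end

section
/- For nonnegative integers m_1,...,m_N with \sum_n m_n = K, N^* = |\{n: m_n>0\}| \ge 1, fixed index j with m_j > 0, and 1 \le t \le K-1: the sum over transmission types \vec{t} with t_j \ge 1 of \sum_{n \in supp(\vec{t}) \setminus \{j\}} \binom{m_j - 1}{t_j - 1} \binom{m_n - 1}{t_n - 1} \prod_{n' \in supp(\vec{t}) \setminus \{n, j\}} \binom{m_{n'}}{t_{n'}} equals (N^*-1) \binom{K-2}{t-1}. -/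
/-!
Exchange the two sums. For a fixed second group `n ≠ j`, the summand only sees the transmission
types with `t_j, t_n ≥ 1`; shifting them by `e_j + e_n` turns the inner sum into the multivariate
Vandermonde sum `∑_{|w| = t-1} ∏_k C(m'_k, w_k) = C(K-2, t-1)` with `m' = m - e_j - e_n`.
A group with `m_n = 0` contributes nothing, which leaves `N* - 1` equal terms.
-/

open Finset

namespace Nat

variable {ι : Type*}

theorem sum_piAntidiag_prod_choose [DecidableEq ι] (s : Finset ι) (g : ι → ℕ) (c : ℕ) :
    ∑ w ∈ s.piAntidiag c, ∏ k ∈ s, (g k).choose (w k) = (∑ k ∈ s, g k).choose c := by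
  induction s using Finset.cons_induction generalizing c with
  | empty => cases c <;> simp
  | cons i s hi ih =>
    rw [piAntidiag_cons, sum_disjiUnion, sum_cons, add_choose_eq]
    refine sum_congr rfl fun p _ => ?_
    rw [sum_map, ← ih, mul_sum]
    refine sum_congr rfl fun f hf => ?_
    have hfi : f i = 0 := by
      by_contra h
      exact hi ((mem_piAntidiag.1 hf).2 i h)
    rw [prod_cons]
    simp only [addRightEmbedding_apply, Pi.add_apply, hfi, zero_add]
    congr 1
    refine prod_congr rfl fun k hk => ?_
    rw [if_neg (ne_of_mem_of_not_mem hk hi), add_zero]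

theorem prod_filter_ne_zero_choose (s : Finset ι) (m v : ι → ℕ) :
    ∏ k ∈ s.filter (fun k => v k ≠ 0), (m k).choose (v k) = ∏ k ∈ s, (m k).choose (v k) :=
  prod_filter_of_ne fun k _ hk => by contrapose! hk; rw [hk, choose_zero_right]

variable [DecidableEq ι] [Fintype ι]

theorem sum_piFinset_prod_choose (g : ι → ℕ) (c : ℕ) :
    ∑ w ∈ (Fintype.piFinset fun k => range (g k + 1)).filter (fun w => ∑ k, w k = c),
      ∏ k, (g k).choose (w k) = (∑ k, g k).choose c := by
  rw [← sum_piAntidiag_prod_choose]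
  refine sum_subset (fun w hw => ?_) fun w hw hw' => ?_
  · simp_all
  · obtain ⟨k, hk⟩ : ∃ k, g k < w k := by simp_all
    exact prod_eq_zero (mem_univ k) (choose_eq_zero_of_lt hk)

theorem sum_piFinset_prod_choose_tsub {g a : ι → ℕ} (ha : a ≤ g) (c : ℕ) :
    ∑ v ∈ (Fintype.piFinset fun k => range (g k + 1)).filter
        (fun v => ∑ k, v k = c + ∑ k, a k ∧ ∀ k, a k ≤ v k),
      ∏ k, (g k - a k).choose (v k - a k) = (∑ k, g k - ∑ k, a k).choose c := by
  rw [← sum_tsub_distrib _ fun k _ => ha k, ← sum_piFinset_prod_choose fun k => g k - a k]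
  refine sum_nbij' (· - a) (· + a) (fun v hv => ?_) (fun w hw => ?_) (fun v hv => ?_)
    (fun w _ => add_tsub_cancel_right w a) fun v _ => rfl
  · simp only [mem_filter, Fintype.mem_piFinset, mem_range, Pi.sub_apply] at hv ⊢
    obtain ⟨hvg, hsum, hav⟩ := hv
    refine ⟨fun k => ?_, ?_⟩
    · have := hvg k
      omega
    · rw [sum_tsub_distrib _ fun k _ => hav k]
      omega
  · simp only [mem_filter, Fintype.mem_piFinset, mem_range, Pi.add_apply] at hw ⊢
    obtain ⟨hwg, hsum⟩ := hw
    refine ⟨fun k => ?_, by rw [sum_add_distrib, hsum], fun k => le_add_self⟩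
    have hwk : w k < g k - a k + 1 := hwg k
    have hak : a k ≤ g k := ha k
    omega
  · exact tsub_add_cancel_of_le (mem_filter.1 hv).2.2

theorem sum_choose_pred_pair_mul_prod_choose {m : ι → ℕ} {j n : ι} (hjn : j ≠ n)
    (hj : 0 < m j) (hn : 0 < m n) {t : ℕ} (ht : 1 ≤ t) :
    ∑ v ∈ (Fintype.piFinset fun k => range (m k + 1)).filter
        (fun v => (∑ k, v k = t + 1 ∧ 0 < v j) ∧ v n ≠ 0),
      (m j - 1).choose (v j - 1) * (m n - 1).choose (v n - 1) *
        ∏ k ∈ (univ.erase j).erase n, (m k).choose (v k)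
      = (∑ k, m k - 2).choose (t - 1) := by
  set a : ι → ℕ := Pi.single j 1 + Pi.single n 1 with ha
  have haj : a j = 1 := by simp [ha, hjn]
  have han : a n = 1 := by simp [ha, hjn.symm]
  have hak : ∀ k, k ≠ j → k ≠ n → a k = 0 := fun k hkj hkn => by simp [ha, hkj, hkn]
  have hsum : ∑ k, a k = 2 := by simp [ha, sum_add_distrib]
  have hag : a ≤ m := fun k => by
    rcases eq_or_ne k j with rfl | hkj
    · rwa [haj]
    rcases eq_or_ne k n with rfl | hkn
    · rwa [han]
    · simp [hak k hkj hkn]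
  have hle : ∀ v : ι → ℕ, (∀ k, a k ≤ v k) ↔ 0 < v j ∧ v n ≠ 0 := by
    refine fun v => ⟨fun h => ?_, fun ⟨hvj, hvn⟩ k => ?_⟩
    · have hvj : a j ≤ v j := h j
      have hvn : a n ≤ v n := h n
      rw [haj] at hvj
      rw [han] at hvn
      omega
    · rcases eq_or_ne k j with rfl | hkj
      · rwa [haj]
      rcases eq_or_ne k n with rfl | hkn
      · rw [han]
        omega
      · simp [hak k hkj hkn]
  have hprod : ∀ v : ι → ℕ, ∏ k, (m k - a k).choose (v k - a k)
      = (m j - 1).choose (v j - 1) * (m n - 1).choose (v n - 1) *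
        ∏ k ∈ (univ.erase j).erase n, (m k).choose (v k) := by
    intro v
    rw [← mul_prod_erase univ _ (mem_univ j),
      ← mul_prod_erase _ _ (mem_erase.2 ⟨hjn.symm, mem_univ n⟩), haj, han, ← mul_assoc]
    congr 1
    refine prod_congr rfl fun k hk => ?_
    simp only [mem_erase] at hk
    simp [hak k hk.2.1 hk.1]
  rw [← hsum, ← sum_piFinset_prod_choose_tsub hag]
  refine sum_congr (filter_congr fun v _ => ?_) fun v _ => (hprod v).symm
  rw [hle, hsum]
  omega

end Nat

theorem delta_memory_full_decomposition_general (N K t : ℕ) (m : Fin N → ℕ)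
    (hm : ∑ n, m n = K) (j : Fin N) (hj : 0 < m j)
    (ht1 : 1 ≤ t) :
    ∑ v ∈ (Fintype.piFinset fun n => Finset.range (m n + 1)).filter
        (fun v => (∑ n, v n = t + 1) ∧ 0 < v j),
      ∑ n ∈ ((Finset.univ.filter (fun n => v n ≠ 0)).erase j),
        (m j - 1).choose (v j - 1) * ((m n - 1).choose (v n - 1)) *
          ∏ n' ∈ ((Finset.univ.filter (fun n' => v n' ≠ 0)).erase j).erase n,
            (m n').choose (v n')
      = ((Finset.univ.filter (fun n => 0 < m n)).card - 1) * (K - 2).choose (t - 1) := by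
  set S := (Fintype.piFinset fun n => range (m n + 1)).filter
    (fun v => (∑ n, v n = t + 1) ∧ 0 < v j)
  rw [sum_comm' (t' := univ.erase j) (s' := fun n => S.filter (fun v => v n ≠ 0))
    fun v n => by simp only [mem_filter, mem_erase, mem_univ]; tauto]
  have inner : ∀ n ∈ univ.erase j,
      ∑ v ∈ S.filter (fun v => v n ≠ 0),
        (m j - 1).choose (v j - 1) * ((m n - 1).choose (v n - 1)) *
          ∏ n' ∈ ((univ.filter (fun n' => v n' ≠ 0)).erase j).erase n, (m n').choose (v n')
        = if 0 < m n then (K - 2).choose (t - 1) else 0 := by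
    intro n hn
    split_ifs with hmn
    · rw [filter_filter, ← hm,
        ← Nat.sum_choose_pred_pair_mul_prod_choose (mem_erase.1 hn).1.symm hj hmn ht1]
      refine sum_congr rfl fun v _ => ?_
      rw [← filter_erase, ← filter_erase, Nat.prod_filter_ne_zero_choose]
    · refine sum_eq_zero fun v hv => ?_
      simp only [S, mem_filter, Fintype.mem_piFinset, mem_range] at hv
      have hvn : v n < m n + 1 := hv.1.1 n
      omega
  rw [sum_congr rfl inner, sum_ite, sum_const_zero, add_zero, sum_const, smul_eq_mul,
    filter_erase, card_erase_of_mem (by simpa using hj)]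

/-- Memory saving of the fully decomposed scheme: for a fixed group `j` with `m_j > 0`,
`∑_{t⃗ : t_j ≥ 1} ∑_{n ∈ supp(t⃗)\{j\}} C(m_j-1,t_j-1) C(m_n-1,t_n-1)
   ∏_{n' ∈ supp(t⃗)\{n,j\}} C(m_{n'},t_{n'}) = (N*-1)·C(K-2, t-1)`. -/
theorem delta_memory_full_decomposition (N K t : ℕ) (m : Fin N → ℕ)
    (hm : ∑ n, m n = K) (j : Fin N) (hj : 0 < m j)
    (hNs : 1 ≤ (Finset.univ.filter (fun n => 0 < m n)).card)
    (ht1 : 1 ≤ t) (ht2 : t < K) :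
    ∑ v ∈ (Fintype.piFinset fun n => Finset.range (m n + 1)).filter
        (fun v => (∑ n, v n = t + 1) ∧ 0 < v j),
      ∑ n ∈ ((Finset.univ.filter (fun n => v n ≠ 0)).erase j),
        (m j - 1).choose (v j - 1) * ((m n - 1).choose (v n - 1)) *
          ∏ n' ∈ ((Finset.univ.filter (fun n' => v n' ≠ 0)).erase j).erase n,
            (m n').choose (v n')
      = ((Finset.univ.filter (fun n => 0 < m n)).card - 1) * (K - 2).choose (t - 1) :=
  delta_memory_full_decomposition_general N K t m hm j hj ht1
end
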